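/- Let n,d ≥ 2 and λ ∈ W, i.e. (n/d)(d/(2m))^{md/(nd−m)} ≤ |λ| ≤ (n/d)(2d/m)^{m/n} with m = n+d and nd > m. If |z| ≤ (1/2)(d|λ|/n)^{1/d}, then |F_λ(z)| ≥ 2, where F_λ(z) = z^n + λ/z^d and z ≠ 0. -/

import Mathlib

open Complex Real

lemma aux_3d_le (d : ℕ) (hd : 2 ≤ d) : 3 * d ≤ 2 ^ (d + 1) := by
  induction d with
  | zero => omega
  | succ k ih =>
    rcases Nat.lt_or_ge k 2 with h | h
    · interval_cases k <;> simp_all <;> omega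
    · have := ih h
      have h8 : 8 ≤ 2 ^ (k + 1) := by
        calc (8:ℕ) = 2 ^ 3 := rfl
        _ ≤ 2 ^ (k + 1) := Nat.pow_le_pow_right (by norm_num) (by omega)
      have : 2 ^ (k + 2) = 2 ^ (k+1) + 2 ^ (k+1) := by ring
      omega

theorem stmt_14 (n d : ℕ) (hn : 2 ≤ n) (hd : 2 ≤ d)
    (m : ℕ) (hm : m = n + d) (hnd : m < n * d)
    (lam : ℂ) (hlam : lam ≠ 0)
    (hlo : (n / d : ℝ) * ((d / (2 * m) : ℝ) ^ ((m * d : ℝ) / (n * d - m))) ≤ ‖lam‖)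
    (hhi : ‖lam‖ ≤ (n / d : ℝ) * ((2 * d / m : ℝ) ^ ((m : ℝ) / n)))
    (z : ℂ) (hz : z ≠ 0)
    (hzle : ‖z‖ ≤ (1 / 2 : ℝ) * ((d * ‖lam‖ / n : ℝ) ^ ((1 : ℝ) / d))) :
    2 ≤ ‖z ^ n + lam / z ^ d‖ := by
  set a := ‖lam‖ with ha_def
  set r := ‖z‖ with hr_def
  have ha : 0 < a := norm_pos_iff.mpr hlam
  have hr : 0 < r := norm_pos_iff.mpr hz
  have hd0 : (0:ℝ) < d := by positivity
  have hn0 : (0:ℝ) < n := by positivity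
  have hm0 : (0:ℝ) < m := by
    have : 0 < m := by omega
    exact_mod_cast this
  set X : ℝ := d * a / n with hX_def
  have hX : 0 < X := by positivity
  -- X ≤ 2^d
  have hX2 : X ≤ 2 ^ d := by
    have h1 : X ≤ ((2 * d / m : ℝ) ^ ((m : ℝ) / n)) := by
      rw [hX_def]
      rw [div_le_iff₀ hn0]
      calc (d:ℝ) * a ≤ d * ((n / d : ℝ) * ((2 * d / m : ℝ) ^ ((m : ℝ) / n))) := by
            apply mul_le_mul_of_nonneg_left hhi hd0.le
        _ = (2 * d / m : ℝ) ^ ((m : ℝ) / n) * n := by field_simp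
    have h2 : ((2 * d / m : ℝ) ^ ((m : ℝ) / n)) ≤ (2:ℝ) ^ ((m : ℝ) / n) := by
      apply Real.rpow_le_rpow (by positivity) _ (by positivity)
      rw [div_le_iff₀ hm0, hm]
      push_cast
      nlinarith
    have h3 : (2:ℝ) ^ ((m : ℝ) / n) ≤ (2:ℝ) ^ ((d : ℝ)) := by
      apply Real.rpow_le_rpow_of_exponent_le one_le_two
      rw [div_le_iff₀ hn0]
      have : (m:ℝ) ≤ (n:ℝ) * d := by exact_mod_cast hnd.le
      linarith
    have h4 : (2:ℝ) ^ ((d:ℝ)) = (2:ℝ) ^ d := Real.rpow_natCast 2 d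
    linarith
  -- X^(1/d) ≤ 2
  have hXd : X ^ ((1:ℝ)/d) ≤ 2 := by
    have h1 : X ^ ((1:ℝ)/d) ≤ ((2:ℝ) ^ d) ^ ((1:ℝ)/d) := by
      apply Real.rpow_le_rpow hX.le hX2 (by positivity)
    have h2 : ((2:ℝ) ^ d) ^ ((1:ℝ)/d) = 2 := by
      rw [one_div, ← Real.rpow_natCast 2 d, ← Real.rpow_mul (by norm_num)]
      rw [mul_inv_cancel₀ (by positivity)]
      simp
    linarith
  -- r ≤ 1
  have hr1 : r ≤ 1 := by
    calc r ≤ (1/2 : ℝ) * (X ^ ((1:ℝ)/d)) := hzle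
      _ ≤ (1/2 : ℝ) * 2 := by nlinarith
      _ = 1 := by norm_num
  have hrn : r ^ n ≤ 1 := pow_le_one₀ hr.le hr1
  -- r^d ≤ (1/2)^d * X
  have hrd : r ^ d ≤ (1/2:ℝ) ^ d * X := by
    have h1 : r ^ d ≤ ((1/2 : ℝ) * (X ^ ((1:ℝ)/d))) ^ d :=
      pow_le_pow_left₀ hr.le hzle d
    have h2 : ((X ^ ((1:ℝ)/d))) ^ d = X := by
      rw [one_div]
      exact Real.rpow_inv_natCast_pow hX.le (by omega)
    calc r ^ d ≤ ((1/2 : ℝ) * (X ^ ((1:ℝ)/d))) ^ d := h1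
      _ = (1/2:ℝ)^d * ((X ^ ((1:ℝ)/d))) ^ d := mul_pow _ _ _
      _ = (1/2:ℝ)^d * X := by rw [h2]
  -- key numeric fact
  have h3d : (3:ℝ) * d ≤ 2 ^ d * n := by
    have h := aux_3d_le d hd
    have : 3 * d ≤ 2 ^ d * n := by
      calc 3 * d ≤ 2 ^ (d+1) := h
        _ = 2 ^ d * 2 := by ring
        _ ≤ 2 ^ d * n := Nat.mul_le_mul_left _ hn
    exact_mod_cast this
  -- main inequality: (2 + r^n) * r^d ≤ a
  have hmain : (2 + r ^ n) * r ^ d ≤ a := by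
    have hrd_pos : (0:ℝ) < r ^ d := by positivity
    have h2pd : (0:ℝ) < 2 ^ d := by positivity
    have step : (2 + r ^ n) * r ^ d ≤ 3 * ((1/2:ℝ)^d * X) := by
      have h1 : (2 + r ^ n) ≤ 3 := by linarith
      have h2 : (0:ℝ) ≤ (1/2:ℝ)^d * X := by positivity
      calc (2 + r ^ n) * r ^ d ≤ 3 * r ^ d := by nlinarith
        _ ≤ 3 * ((1/2:ℝ)^d * X) := by nlinarith
    have step2 : 3 * ((1/2:ℝ)^d * X) ≤ a := by
      have heq : 3 * ((1/2:ℝ)^d * X) = 3 * d * a / (2 ^ d * n) := by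
        rw [hX_def, div_pow, one_pow]; field_simp
      rw [heq, div_le_iff₀ (by positivity : (0:ℝ) < (2:ℝ)^d * n)]
      nlinarith
    linarith
  -- conclude
  have hrd_pos : (0:ℝ) < r ^ d := by positivity
  have hdiv : 2 + r ^ n ≤ a / r ^ d := by
    rw [le_div_iff₀ hrd_pos]; exact hmain
  have habs1 : ‖lam / z ^ d‖ = a / r ^ d := by
    rw [norm_div, norm_pow]
  have habs2 : ‖z ^ n‖ = r ^ n := by rw [norm_pow]
  have step1 : ‖lam / z ^ d‖ - ‖z ^ n‖
      ≤ ‖z ^ n + lam / z ^ d‖ := by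
    have h := norm_sub_norm_le (lam / z ^ d) (-(z ^ n))
    simp only [norm_neg, sub_neg_eq_add] at h
    rw [add_comm (lam / z ^ d) (z ^ n)] at h
    exact h
  rw [habs1, habs2] at step1
  linarith
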